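/- arXiv:1807.08731 — 3 statements merged into one kernel-verified Lean document; each statement's English description precedes it below -/
import Mathlib

section
/- Let N ≥ 1 and let p_1 < z_1 < p_2 < z_2 < … < p_N < z_N be real numbers. Then for every complex number w with Im w > 0, the polynomial P_w(u) = ∏_{j=1}^N (u − z_j) − w·∏_{j=1}^N (u − p_j) has degree exactly N and all of its complex roots lie in the open upper half-plane {u : Im u > 0}. Consequently the rational function R(u) = ∏_{j=1}^N (u − z_j)/(u − p_j) attains every value of the open upper half-plane exactly N times in the upper half-plane, counted with multiplicity. -/
open Complex Polynomial Finset

/-- The polynomial `P_w(u) = ∏ (u - z_j) - w ∏ (u - p_j)`. -/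
noncomputable def blaschkePolyH (N : ℕ) (p z : Fin N → ℝ) (w : ℂ) : Polynomial ℂ :=
  (∏ j : Fin N, (X - C (z j : ℂ))) - C w * ∏ j : Fin N, (X - C (p j : ℂ))

section Aux

variable {N : ℕ} {p z : Fin N → ℝ}

private lemma im_term_nonpos (c a : ℝ) (u : ℂ) (hc : c < 0) (hu : u.im ≤ 0) :
    ((c : ℂ) / (u - (a : ℂ))).im ≤ 0 := by
  rw [Complex.div_im]
  simp only [Complex.ofReal_im, Complex.ofReal_re, Complex.sub_im, Complex.sub_re, zero_mul,
    zero_div, sub_zero, zero_sub]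
  have h1 : 0 ≤ c * u.im := mul_nonneg_of_nonpos_of_nonpos hc.le hu
  have h2 : 0 ≤ Complex.normSq (u - (a : ℂ)) := Complex.normSq_nonneg _
  have := div_nonneg h1 h2
  linarith

end Aux

/-- For alternating real zeros/poles `p_1 < z_1 < … < p_N < z_N` and any `w` in the open
upper half-plane, the polynomial `∏ (u - z_j) - w ∏ (u - p_j)` has degree exactly `N` and
all of its roots lie in the open upper half-plane; hence `R(u) = ∏ (u-z_j)/(u-p_j)`
attains every value of the upper half-plane exactly `N` times there, counted with
multiplicity. -/
theorem blaschke_halfplane_degree_N_covering (N : ℕ) (hN : 1 ≤ N) (p z : Fin N → ℝ)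
    (hpz : ∀ j : Fin N, p j < z j)
    (hzp : ∀ j : Fin N, ∀ h : (j : ℕ) + 1 < N, z j < p ⟨(j : ℕ) + 1, h⟩)
    (w : ℂ) (hw : 0 < w.im) :
    (blaschkePolyH N p z w).degree = N ∧
    (∀ u : ℂ, (blaschkePolyH N p z w).IsRoot u → 0 < u.im) ∧
    Multiset.card (blaschkePolyH N p z w).roots = N := by
  classical
  set A : Polynomial ℂ := ∏ j : Fin N, (X - C (z j : ℂ)) with hAdef
  set B : Polynomial ℂ := ∏ j : Fin N, (X - C (p j : ℂ)) with hBdef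
  -- basic ordering facts
  have hstep : ∀ (k : ℕ) (h : k + 1 < N), p ⟨k, by omega⟩ < p ⟨k + 1, h⟩ := by
    intro k h
    exact (hpz ⟨k, by omega⟩).trans (hzp ⟨k, by omega⟩ h)
  have hmono : ∀ a b : ℕ, ∀ (ha : a < N) (hb : b < N), a < b → p ⟨a, ha⟩ < p ⟨b, hb⟩ := by
    intro a b
    induction b with
    | zero => omega
    | succ n ih =>
      intro ha hb hab
      rcases Nat.lt_or_ge a n with h | h
      · exact (ih ha (by omega) h).trans (hstep n hb)
      · have : a = n := by omega
        subst this
        exact hstep a hb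
  have hm : ∀ i j : Fin N, (i : ℕ) < (j : ℕ) → p i < p j := fun i j h =>
    hmono i j i.isLt j.isLt h
  have hzplt : ∀ i j : Fin N, (i : ℕ) < (j : ℕ) → z i < p j := by
    intro i j hij
    have h1 : (i : ℕ) + 1 < N := lt_of_le_of_lt hij j.isLt
    have h2 := hzp i h1
    rcases eq_or_lt_of_le (Nat.succ_le_of_lt hij) with h | h
    · have : (⟨(i : ℕ) + 1, h1⟩ : Fin N) = j := Fin.ext h
      rwa [this] at h2
    · exact h2.trans (hmono _ _ _ _ h)
  have hpzlt : ∀ i j : Fin N, (j : ℕ) ≤ (i : ℕ) → p j < z i := by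
    intro i j hij
    rcases eq_or_lt_of_le hij with h | h
    · have : j = i := Fin.ext h
      rw [this]; exact hpz i
    · exact (hm j i h).trans (hpz i)
  -- the nodes
  set v : Fin N → ℂ := fun j => ((p j : ℂ)) with hvdef
  have hpinj : Set.InjOn v ↑(univ : Finset (Fin N)) := by
    intro i _ j _ hij
    have hpij : p i = p j := Complex.ofReal_inj.mp hij
    by_contra hne
    rcases Ne.lt_or_gt (fun h : i = j => hne h) with h | h
    · exact absurd hpij (ne_of_lt (hm i j h))
    · exact absurd hpij.symm (ne_of_lt (hm j i h))
  -- degrees and monicity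
  have hAmonic : A.Monic := monic_prod_of_monic _ _ fun j _ => monic_X_sub_C _
  have hBmonic : B.Monic := monic_prod_of_monic _ _ fun j _ => monic_X_sub_C _
  have hAdeg : A.degree = (N : WithBot ℕ) := by
    rw [hAdef, Polynomial.degree_prod]; simp [Polynomial.degree_X_sub_C]
  have hBdeg : B.degree = (N : WithBot ℕ) := by
    rw [hBdef, Polynomial.degree_prod]; simp [Polynomial.degree_X_sub_C]
  have hAnd : A.natDegree = N := natDegree_eq_of_degree_eq_some hAdeg
  have hBnd : B.natDegree = N := natDegree_eq_of_degree_eq_some hBdeg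
  -- degree of the main polynomial
  have hw1 : w ≠ 1 := by intro h; rw [h] at hw; simp at hw
  have hcoeff : (blaschkePolyH N p z w).coeff N = 1 - w := by
    have hA1 : A.coeff N = 1 := by rw [← hAnd]; exact hAmonic.coeff_natDegree
    have hB1 : B.coeff N = 1 := by rw [← hBnd]; exact hBmonic.coeff_natDegree
    rw [blaschkePolyH, Polynomial.coeff_sub, Polynomial.coeff_C_mul]
    rw [← hAdef, ← hBdef, hA1, hB1, mul_one]
  have hdegle : (blaschkePolyH N p z w).degree ≤ (N : WithBot ℕ) := by
    refine le_trans (Polynomial.degree_sub_le _ _) ?_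
    rw [max_le_iff]
    constructor
    · rw [← hAdef, hAdeg]
    · calc (C w * B).degree ≤ (C w).degree + B.degree := Polynomial.degree_mul_le _ _
        _ ≤ 0 + (N : WithBot ℕ) := add_le_add Polynomial.degree_C_le (le_of_eq hBdeg)
        _ = (N : WithBot ℕ) := zero_add _
  have hdegge : (N : WithBot ℕ) ≤ (blaschkePolyH N p z w).degree :=
    Polynomial.le_degree_of_ne_zero (by rw [hcoeff]; exact sub_ne_zero.mpr (Ne.symm hw1))
  have hdeg : (blaschkePolyH N p z w).degree = (N : WithBot ℕ) := le_antisymm hdegle hdegge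
  have hP0 : blaschkePolyH N p z w ≠ 0 := by
    intro h
    rw [h, Polynomial.degree_zero] at hdeg
    exact absurd hdeg.symm (by simp)
  have hnd : (blaschkePolyH N p z w).natDegree = N := natDegree_eq_of_degree_eq_some hdeg
  -- partial fraction coefficients
  set c : Fin N → ℝ := fun j =>
    (∏ i : Fin N, (p j - z i)) / ∏ i ∈ univ.erase j, (p j - p i) with hcdef
  have hcneg : ∀ j, c j < 0 := by
    intro j
    have hnum : (∏ i : Fin N, (p j - z i))
        = (p j - z j) * ∏ i ∈ univ.erase j, (p j - z i) :=
      (Finset.mul_prod_erase univ _ (mem_univ j)).symm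
    rw [hcdef]
    simp only
    rw [hnum, mul_div_assoc, ← Finset.prod_div_distrib]
    apply mul_neg_of_neg_of_pos
    · linarith [hpz j]
    · apply Finset.prod_pos
      intro i hi
      have hij : i ≠ j := (Finset.mem_erase.mp hi).1
      rcases Ne.lt_or_gt (fun h : (i : ℕ) = (j : ℕ) => hij (Fin.ext h)) with h | h
      · exact div_pos (by linarith [hzplt i j h]) (by linarith [hm i j h])
      · exact div_pos_of_neg_of_neg (by linarith [hpzlt i j h.le]) (by linarith [hm j i h])
  -- the interpolation identity
  have hQdeg : (A - B).degree < (N : WithBot ℕ) := by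
    have := Polynomial.degree_sub_lt (hAdeg.trans hBdeg.symm) hAmonic.ne_zero
      (hAmonic.leadingCoeff.trans hBmonic.leadingCoeff.symm)
    rwa [hAdeg] at this
  have hcard : (#(univ : Finset (Fin N)) : WithBot ℕ) = (N : WithBot ℕ) := by
    simp
  have hQinterp : A - B = Lagrange.interpolate univ v (fun i => (A - B).eval (v i)) :=
    Lagrange.eq_interpolate hpinj (by rw [hcard]; exact hQdeg)
  have hQeval : ∀ j : Fin N, (A - B).eval (v j) = ((∏ i : Fin N, (p j - z i) : ℝ) : ℂ) := by
    intro j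
    rw [Polynomial.eval_sub, hAdef, hBdef, Polynomial.eval_prod, Polynomial.eval_prod]
    have hB0 : ∏ i : Fin N, ((X - C ((p i : ℂ))).eval (v j)) = 0 := by
      apply Finset.prod_eq_zero (mem_univ j)
      simp [hvdef]
    rw [hB0, sub_zero]
    push_cast
    apply Finset.prod_congr rfl
    intro i _
    simp [hvdef]
  -- main root location fact
  have hroot : ∀ u : ℂ, (blaschkePolyH N p z w).IsRoot u → 0 < u.im := by
    intro u hu
    by_contra himu
    push_neg at himu
    have heval : A.eval u - w * B.eval u = 0 := by
      have := hu
      rw [Polynomial.IsRoot, blaschkePolyH] at this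
      rw [Polynomial.eval_sub, Polynomial.eval_mul, Polynomial.eval_C] at this
      rw [← hAdef, ← hBdef] at this
      exact this
    have hBne : B.eval u ≠ 0 := by
      intro h0
      have hA0 : A.eval u = 0 := by
        have : A.eval u = w * B.eval u := by linear_combination heval
        rw [this, h0, mul_zero]
      rw [hBdef, Polynomial.eval_prod, Finset.prod_eq_zero_iff] at h0
      rw [hAdef, Polynomial.eval_prod, Finset.prod_eq_zero_iff] at hA0
      obtain ⟨j, -, hj⟩ := h0
      obtain ⟨i, -, hi⟩ := hA0
      simp only [Polynomial.eval_sub, Polynomial.eval_X, Polynomial.eval_C, sub_eq_zero] at hj hi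
      have : (z i : ℂ) = (p j : ℂ) := by rw [← hi, ← hj]
      have hzpij : z i = p j := by exact_mod_cast this
      rcases Nat.lt_or_ge (i : ℕ) (j : ℕ) with h | h
      · exact absurd hzpij (ne_of_lt (hzplt i j h))
      · exact absurd hzpij.symm (ne_of_lt (hpzlt i j h))
    have huv : ∀ j : Fin N, u - v j ≠ 0 := by
      intro j h0
      apply hBne
      rw [hBdef, Polynomial.eval_prod]
      apply Finset.prod_eq_zero (mem_univ j)
      simpa [hvdef] using h0
    -- evaluate the interpolation identity at u
    have hBu : B.eval u = ∏ i : Fin N, (u - v i) := by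
      rw [hBdef, Polynomial.eval_prod]
      apply Finset.prod_congr rfl
      intro i _
      simp [hvdef]
    have hEne : ∀ j : Fin N, (∏ i ∈ univ.erase j, (u - v i)) ≠ 0 := by
      intro j
      exact Finset.prod_ne_zero_iff.mpr fun i _ => huv i
    have hDne : ∀ j : Fin N, (∏ i ∈ univ.erase j, (v j - v i)) ≠ 0 := by
      intro j
      refine Finset.prod_ne_zero_iff.mpr fun i hi => sub_ne_zero.mpr ?_
      exact fun h => (Finset.mem_erase.mp hi).1 (hpinj (by simp) (by simp) h).symm
    have hQu : (A - B).eval u = ∑ j : Fin N,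
        ((∏ i : Fin N, (p j - z i) : ℝ) : ℂ) *
          ((∏ i ∈ univ.erase j, (v j - v i))⁻¹ * ∏ i ∈ univ.erase j, (u - v i)) := by
      conv_lhs => rw [hQinterp]
      rw [Lagrange.interpolate_apply, Polynomial.eval_finset_sum]
      apply Finset.sum_congr rfl
      intro j _
      rw [Polynomial.eval_mul, Polynomial.eval_C, hQeval j]
      congr 1
      rw [Lagrange.basis, Polynomial.eval_prod, ← Finset.prod_inv_distrib,
        ← Finset.prod_mul_distrib]
      apply Finset.prod_congr rfl
      intro i _
      simp [Lagrange.basisDivisor]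
    -- rational function identity
    have hRu : A.eval u / B.eval u = 1 + ∑ j : Fin N, ((c j : ℝ) : ℂ) / (u - v j) := by
      have hsplit : A.eval u / B.eval u = 1 + (A - B).eval u / B.eval u := by
        rw [Polynomial.eval_sub, sub_div, div_self hBne]
        ring
      rw [hsplit, hQu, Finset.sum_div]
      congr 1
      apply Finset.sum_congr rfl
      intro j _
      have hBfac : B.eval u = (u - v j) * ∏ i ∈ univ.erase j, (u - v i) := by
        rw [hBu]; exact (Finset.mul_prod_erase univ _ (mem_univ j)).symm
      have hcast : ((c j : ℝ) : ℂ) =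
          ((∏ i : Fin N, (p j - z i) : ℝ) : ℂ) / ∏ i ∈ univ.erase j, (v j - v i) := by
        rw [hcdef]
        push_cast [hvdef]
        rfl
      rw [hBfac, hcast, ← mul_assoc, mul_div_mul_right _ _ (hEne j)]
      rw [div_eq_mul_inv ((((∏ i : Fin N, (p j - z i) : ℝ)) : ℂ))
        (∏ i ∈ univ.erase j, (v j - v i))]
    have hRw : A.eval u / B.eval u = w := by
      rw [div_eq_iff hBne]
      linear_combination heval
    have him : w.im ≤ 0 := by
      rw [← hRw, hRu]
      rw [Complex.add_im, Complex.one_im, zero_add]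
      rw [Complex.im_sum]
      apply Finset.sum_nonpos
      intro j _
      exact im_term_nonpos (c j) (p j) u (hcneg j) himu
    linarith
  refine ⟨hdeg, hroot, ?_⟩
  have hcr := Polynomial.splits_iff_card_roots.mp
    (IsAlgClosed.splits (blaschkePolyH N p z w))
  rw [hnd] at hcr
  exact hcr
end

section
/- Let P and Q be nonzero coprime polynomials with real coefficients such that the rational function R = P/Q satisfies Im R(u) > 0 for every complex u with Im u > 0. Then every complex root of P and every complex root of Q is real and simple, the roots of P and the roots of Q strictly interlace (between any two consecutive real roots of Q there is exactly one root of P, and between any two consecutive real roots of P there is exactly one root of Q), and |deg P − deg Q| ≤ 1. -/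
open Complex Polynomial Filter Set Topology

namespace HB

lemma sign_aux {c : ℝ} {k : ℕ} (hk : 2 ≤ k)
    (h : ∀ θ : ℝ, 0 < θ → θ < Real.pi → 0 ≤ c * Real.sin (k * θ)) : c = 0 := by
  have hπ := Real.pi_pos
  have hk0 : (0:ℝ) < (k:ℝ) := by exact_mod_cast Nat.lt_of_lt_of_le Nat.zero_lt_two hk
  have hk2 : (2:ℝ) ≤ (k:ℝ) := by exact_mod_cast hk
  have h1 : 0 ≤ c := by
    have ht := h (Real.pi / (2*k)) (by positivity) (by
      rw [div_lt_iff₀ (by positivity)]; nlinarith)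
    have he : (k:ℝ) * (Real.pi/(2*k)) = Real.pi/2 := by field_simp
    rw [he, Real.sin_pi_div_two, mul_one] at ht; exact ht
  have h2 : c ≤ 0 := by
    have ht := h (3*Real.pi / (2*k)) (by positivity) (by
      rw [div_lt_iff₀ (by positivity)]; nlinarith)
    have he : (k:ℝ) * (3*Real.pi/(2*k)) = Real.pi/2 + Real.pi := by field_simp; ring
    rw [he, Real.sin_add_pi, Real.sin_pi_div_two] at ht; linarith
  linarith

lemma im_lim_nonneg {l : Filter ℝ} [l.NeBot] {f : ℝ → ℂ} {N : ℕ} {L : ℂ}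
    (hpos : ∀ᶠ r in l, 0 < r ∧ 0 < (f r).im)
    (hlim : Tendsto (fun r => f r / (r:ℂ)^N) l (𝓝 L)) : 0 ≤ L.im := by
  have him : Tendsto (fun r => (f r / (r:ℂ)^N).im) l (𝓝 L.im) :=
    (Complex.continuous_im.tendsto L).comp hlim
  refine ge_of_tendsto him ?_
  filter_upwards [hpos] with r hr
  obtain ⟨hr0, hf⟩ := hr
  have h1 : ((r:ℂ)^N) = ((r^N : ℝ) : ℂ) := by push_cast; ring
  rw [h1, Complex.div_ofReal_im]
  positivity

lemma prod_im_pos (P Q : ℝ[X])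
    (hmap : ∀ u : ℂ, 0 < u.im → 0 < ((aeval u) P / (aeval u) Q).im)
    (u : ℂ) (hu : 0 < u.im) :
    0 < ((aeval u) P * (starRingEnd ℂ) ((aeval u) Q)).im := by
  have hQ : (aeval u) Q ≠ 0 := by
    intro h
    have h2 := hmap u hu
    rw [h, div_zero] at h2
    simp at h2
  have hconj : (aeval u) P * (starRingEnd ℂ) ((aeval u) Q)
      = ((aeval u) P / (aeval u) Q) * ((Complex.normSq ((aeval u) Q) : ℝ) : ℂ) := by
    rw [← Complex.mul_conj]
    field_simp
  rw [hconj, Complex.mul_im]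
  have := mul_pos (hmap u hu) (Complex.normSq_pos.mpr hQ)
  simpa using this


lemma tendsto_u (x0 : ℝ) (e : ℂ) :
    Tendsto (fun r : ℝ => (x0:ℂ) + r * e) (nhdsWithin 0 (Set.Ioi 0)) (𝓝 (x0:ℂ)) := by
  have hc : Continuous (fun r : ℝ => (x0:ℂ) + r * e) := by continuity
  have := hc.tendsto 0
  simp only [Complex.ofReal_zero, zero_mul, add_zero] at this
  exact this.mono_left nhdsWithin_le_nhds

lemma aeval_ofReal' (p : ℝ[X]) (x : ℝ) : aeval (x:ℂ) p = ((p.eval x : ℝ) : ℂ) := by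
  rw [← Complex.coe_algebraMap, aeval_algebraMap_apply_eq_algebraMap_eval]

lemma ray_root (P Q : ℝ[X])
    (hprod : ∀ u : ℂ, 0 < u.im → 0 < ((aeval u) P * (starRingEnd ℂ) ((aeval u) Q)).im)
    (x0 : ℝ) (a : ℕ) (S : ℝ[X]) (hfac : P = (X - C x0)^a * S)
    (θ : ℝ) (h0 : 0 < θ) (hπ : θ < Real.pi) :
    0 ≤ (S.eval x0 * Q.eval x0) * Real.sin (a * θ) := by
  set e : ℂ := Complex.exp (θ * I) with he
  set u : ℝ → ℂ := fun r => (x0:ℂ) + r * e with hu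
  have him : ∀ r : ℝ, 0 < r → 0 < (u r).im := by
    intro r hr
    have : (u r).im = r * Real.sin θ := by
      simp [hu, he, Complex.add_im, Complex.mul_im, Complex.exp_ofReal_mul_I_im,
        Complex.exp_ofReal_mul_I_re]
    rw [this]
    exact mul_pos hr (Real.sin_pos_of_pos_of_lt_pi h0 hπ)
  set f : ℝ → ℂ := fun r => aeval (u r) P * (starRingEnd ℂ) (aeval (u r) Q) with hf
  set L : ℂ := Complex.exp ((a * θ : ℝ) * I) * ((S.eval x0 * Q.eval x0 : ℝ) : ℂ) with hL
  have hlim : Tendsto (fun r => f r / (r:ℂ)^a) (nhdsWithin 0 (Set.Ioi 0)) (𝓝 L) := by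
    have htu := tendsto_u x0 e
    have hS : Tendsto (fun r => aeval (u r) S) (nhdsWithin 0 (Set.Ioi 0)) (𝓝 (aeval (x0:ℂ) S)) :=
      (S.continuous_aeval.tendsto _).comp htu
    have hQ : Tendsto (fun r => (starRingEnd ℂ) (aeval (u r) Q)) (nhdsWithin 0 (Set.Ioi 0))
        (𝓝 ((starRingEnd ℂ) (aeval (x0:ℂ) Q))) :=
      (continuous_star.tendsto _).comp ((Q.continuous_aeval.tendsto _).comp htu)
    have hmain : Tendsto (fun r => e^a * (aeval (u r) S * (starRingEnd ℂ) (aeval (u r) Q)))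
        (nhdsWithin 0 (Set.Ioi 0)) (𝓝 (e^a * (aeval (x0:ℂ) S * (starRingEnd ℂ) (aeval (x0:ℂ) Q)))) :=
      tendsto_const_nhds.mul (hS.mul hQ)
    have hLeq : e^a * (aeval (x0:ℂ) S * (starRingEnd ℂ) (aeval (x0:ℂ) Q)) = L := by
      rw [aeval_ofReal', aeval_ofReal', Complex.conj_ofReal, hL, he]
      rw [← Complex.exp_nat_mul]
      push_cast
      ring_nf
    rw [hLeq] at hmain
    refine hmain.congr' ?_
    filter_upwards [self_mem_nhdsWithin] with r hr
    have hr0 : (r:ℂ) ≠ 0 := by exact_mod_cast ne_of_gt hr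
    have hPval : aeval (u r) P = (r:ℂ)^a * (e^a * aeval (u r) S) := by
      rw [hfac]
      simp only [map_mul, map_pow, map_sub, aeval_X, aeval_C]
      have : u r - (algebraMap ℝ ℂ) x0 = (r:ℂ) * e := by
        simp [hu, Complex.coe_algebraMap]
      rw [this, mul_pow]
      ring
    rw [hf]
    simp only
    rw [hPval]
    field_simp
  have key : 0 ≤ L.im := by
    refine im_lim_nonneg ?_ hlim
    filter_upwards [self_mem_nhdsWithin] with r hr
    exact ⟨hr, hprod (u r) (him r hr)⟩
  rw [hL, Complex.mul_im] at key
  simp only [Complex.exp_ofReal_mul_I_im, Complex.exp_ofReal_mul_I_re, Complex.ofReal_im,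
    Complex.ofReal_re, mul_zero, add_zero, zero_add] at key
  linarith [key]


lemma ray_rootQ (P Q : ℝ[X])
    (hprod : ∀ u : ℂ, 0 < u.im → 0 < ((aeval u) P * (starRingEnd ℂ) ((aeval u) Q)).im)
    (x0 : ℝ) (b : ℕ) (T : ℝ[X]) (hfac : Q = (X - C x0)^b * T)
    (θ : ℝ) (h0 : 0 < θ) (hπ : θ < Real.pi) :
    0 ≤ (-(P.eval x0 * T.eval x0)) * Real.sin (b * θ) := by
  set e : ℂ := Complex.exp (θ * I) with he
  set u : ℝ → ℂ := fun r => (x0:ℂ) + r * e with hu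
  have him : ∀ r : ℝ, 0 < r → 0 < (u r).im := by
    intro r hr
    have : (u r).im = r * Real.sin θ := by
      simp [hu, he, Complex.add_im, Complex.mul_im, Complex.exp_ofReal_mul_I_im,
        Complex.exp_ofReal_mul_I_re]
    rw [this]
    exact mul_pos hr (Real.sin_pos_of_pos_of_lt_pi h0 hπ)
  set f : ℝ → ℂ := fun r => aeval (u r) P * (starRingEnd ℂ) (aeval (u r) Q) with hf
  set L : ℂ := Complex.exp ((-(b * θ) : ℝ) * I) * ((P.eval x0 * T.eval x0 : ℝ) : ℂ) with hL
  have hlim : Tendsto (fun r => f r / (r:ℂ)^b) (nhdsWithin 0 (Set.Ioi 0)) (𝓝 L) := by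
    have htu := tendsto_u x0 e
    have hPl : Tendsto (fun r => aeval (u r) P) (nhdsWithin 0 (Set.Ioi 0)) (𝓝 (aeval (x0:ℂ) P)) :=
      (P.continuous_aeval.tendsto _).comp htu
    have hT : Tendsto (fun r => (starRingEnd ℂ) (aeval (u r) T)) (nhdsWithin 0 (Set.Ioi 0))
        (𝓝 ((starRingEnd ℂ) (aeval (x0:ℂ) T))) :=
      (continuous_star.tendsto _).comp ((T.continuous_aeval.tendsto _).comp htu)
    have hmain : Tendsto (fun r => ((starRingEnd ℂ) e)^b * (aeval (u r) P * (starRingEnd ℂ) (aeval (u r) T)))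
        (nhdsWithin 0 (Set.Ioi 0))
        (𝓝 (((starRingEnd ℂ) e)^b * (aeval (x0:ℂ) P * (starRingEnd ℂ) (aeval (x0:ℂ) T)))) :=
      tendsto_const_nhds.mul (hPl.mul hT)
    have hLeq : ((starRingEnd ℂ) e)^b * (aeval (x0:ℂ) P * (starRingEnd ℂ) (aeval (x0:ℂ) T)) = L := by
      rw [aeval_ofReal', aeval_ofReal', Complex.conj_ofReal, hL, he, ← Complex.exp_conj]
      rw [← Complex.exp_nat_mul]
      have : (starRingEnd ℂ) ((θ:ℂ) * I) = -(θ:ℂ) * I := by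
        simp [Complex.conj_ofReal]
      rw [this]
      push_cast
      ring_nf
    rw [hLeq] at hmain
    refine hmain.congr' ?_
    filter_upwards [self_mem_nhdsWithin] with r hr
    have hr0 : (r:ℂ) ≠ 0 := by exact_mod_cast ne_of_gt hr
    have hQval : (starRingEnd ℂ) (aeval (u r) Q)
        = (r:ℂ)^b * (((starRingEnd ℂ) e)^b * (starRingEnd ℂ) (aeval (u r) T)) := by
      rw [hfac]
      simp only [map_mul, map_pow, map_sub, aeval_X, aeval_C]
      have h1 : (starRingEnd ℂ) (u r) - (starRingEnd ℂ) ((algebraMap ℝ ℂ) x0)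
          = (r:ℂ) * (starRingEnd ℂ) e := by
        simp [hu, Complex.coe_algebraMap, map_add, map_mul, Complex.conj_ofReal]
      rw [h1, mul_pow]
      ring
    rw [hf]
    simp only
    rw [hQval]
    field_simp
  have key : 0 ≤ L.im := by
    refine im_lim_nonneg ?_ hlim
    filter_upwards [self_mem_nhdsWithin] with r hr
    exact ⟨hr, hprod (u r) (him r hr)⟩
  rw [hL, Complex.mul_im] at key
  simp only [Complex.exp_ofReal_mul_I_im, Complex.exp_ofReal_mul_I_re, Complex.ofReal_im,
    Complex.ofReal_re, mul_zero, add_zero, zero_add, Real.sin_neg] at key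
  nlinarith [key]


lemma tendsto_aeval_ray (p : ℝ[X]) (e : ℂ) (he : ‖e‖ = 1) :
    Tendsto (fun r : ℝ => aeval ((r:ℂ) * e) p / ((r:ℂ) * e) ^ p.natDegree)
      atTop (𝓝 ((p.leadingCoeff : ℝ) : ℂ)) := by
  have he0 : e ≠ 0 := by
    intro h; rw [h, norm_zero] at he; norm_num at he
  set n := p.natDegree with hn
  have hinv : Tendsto (fun r : ℝ => ((r:ℂ) * e)⁻¹) atTop (𝓝 0) := by
    rw [tendsto_zero_iff_norm_tendsto_zero]
    have hfe : (fun r : ℝ => ‖((r:ℂ)*e)⁻¹‖) = fun r : ℝ => |r|⁻¹ := by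
      funext r
      rw [norm_inv, norm_mul, he, mul_one, Complex.norm_real, Real.norm_eq_abs]
    rw [hfe]
    exact tendsto_inv_atTop_zero.comp tendsto_abs_atTop_atTop
  have key : ∀ i : ℕ, i ∈ Finset.range (n+1) →
      Tendsto (fun r : ℝ => (p.coeff i : ℂ) * ((r:ℂ)*e)^i / ((r:ℂ)*e)^n) atTop
        (𝓝 (if i = n then ((p.coeff n : ℝ):ℂ) else 0)) := by
    intro i hi
    rw [Finset.mem_range] at hi
    rcases eq_or_lt_of_le (Nat.lt_succ_iff.mp hi) with hieq | hilt
    · subst hieq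
      rw [if_pos rfl]
      refine tendsto_const_nhds.congr' ?_
      filter_upwards [eventually_gt_atTop (0:ℝ)] with r hr
      have hu : (r:ℂ)*e ≠ 0 := mul_ne_zero (by exact_mod_cast ne_of_gt hr) he0
      rw [mul_div_assoc, div_self (pow_ne_zero _ hu), mul_one]
    · rw [if_neg (by omega)]
      have h1 : Tendsto (fun r : ℝ => (p.coeff i : ℂ) * (((r:ℂ)*e)⁻¹)^(n-i)) atTop
          (𝓝 ((p.coeff i : ℂ) * (0:ℂ) ^ (n-i))) :=
        tendsto_const_nhds.mul (hinv.pow _)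
      rw [zero_pow (by omega), mul_zero] at h1
      refine h1.congr' ?_
      filter_upwards [eventually_gt_atTop (0:ℝ)] with r hr
      have hu : (r:ℂ)*e ≠ 0 := mul_ne_zero (by exact_mod_cast ne_of_gt hr) he0
      rw [inv_pow, eq_div_iff (pow_ne_zero _ hu), mul_assoc, inv_mul_eq_div]
      have hpow : ((r:ℂ)*e) ^ n = ((r:ℂ)*e) ^ i * ((r:ℂ)*e) ^ (n - i) := by
        rw [← pow_add]; congr 1; omega
      rw [hpow, mul_div_cancel_right₀ _ (pow_ne_zero _ hu)]
  have hsum := tendsto_finset_sum (Finset.range (n+1)) key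
  have hval : (∑ i ∈ Finset.range (n+1), if i = n then ((p.coeff n : ℝ):ℂ) else 0)
      = ((p.leadingCoeff : ℝ):ℂ) := by
    rw [Finset.sum_ite_eq' (Finset.range (n+1)) n fun _ => ((p.coeff n : ℝ):ℂ),
      if_pos (Finset.self_mem_range_succ n)]
    rfl
  rw [hval] at hsum
  refine hsum.congr ?_
  intro r
  rw [← Finset.sum_div]
  congr 1
  rw [aeval_eq_sum_range]
  exact Finset.sum_congr rfl fun i _ => by rw [Complex.real_smul]


lemma ray_deg (P Q : ℝ[X])
    (hprod : ∀ u : ℂ, 0 < u.im → 0 < ((aeval u) P * (starRingEnd ℂ) ((aeval u) Q)).im)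
    (θ : ℝ) (h0 : 0 < θ) (hπ : θ < Real.pi) :
    0 ≤ (P.leadingCoeff * Q.leadingCoeff) *
      Real.sin (((P.natDegree:ℝ) - Q.natDegree) * θ) := by
  set e : ℂ := Complex.exp (θ * I) with he
  have he1 : ‖e‖ = 1 := by
    rw [he, Complex.norm_exp_ofReal_mul_I]
  have he0 : e ≠ 0 := by intro h; rw [h, norm_zero] at he1; norm_num at he1
  set n := P.natDegree with hn
  set m := Q.natDegree with hm
  set u : ℝ → ℂ := fun r => (r:ℂ) * e with hu
  have him : ∀ r : ℝ, 0 < r → 0 < (u r).im := by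
    intro r hr
    have h1 : (u r).im = r * Real.sin θ := by
      simp [hu, he, Complex.mul_im, Complex.exp_ofReal_mul_I_im, Complex.exp_ofReal_mul_I_re]
    rw [h1]
    exact mul_pos hr (Real.sin_pos_of_pos_of_lt_pi h0 hπ)
  set f : ℝ → ℂ := fun r => aeval (u r) P * (starRingEnd ℂ) (aeval (u r) Q) with hf
  set L : ℂ := Complex.exp (((((n:ℝ) - m) * θ) : ℝ) * I)
      * ((P.leadingCoeff * Q.leadingCoeff : ℝ) : ℂ) with hL
  have hlim : Tendsto (fun r => f r / (r:ℂ)^(n+m)) atTop (𝓝 L) := by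
    have hA := tendsto_aeval_ray P e he1
    have hB : Tendsto (fun r : ℝ => (starRingEnd ℂ) (aeval ((r:ℂ)*e) Q / ((r:ℂ)*e)^m)) atTop
        (𝓝 ((starRingEnd ℂ) ((Q.leadingCoeff : ℝ):ℂ))) :=
      (continuous_star.tendsto _).comp (tendsto_aeval_ray Q e he1)
    have hmain := (hA.mul hB).mul_const (e^n * ((starRingEnd ℂ) e)^m)
    have hLeq : (((P.leadingCoeff : ℝ):ℂ) * (starRingEnd ℂ) ((Q.leadingCoeff : ℝ):ℂ))
        * (e^n * ((starRingEnd ℂ) e)^m) = L := by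
      rw [Complex.conj_ofReal, hL, he, ← Complex.exp_conj]
      have hc : (starRingEnd ℂ) ((θ:ℂ) * I) = -(θ:ℂ) * I := by
        simp [Complex.conj_ofReal]
      rw [hc, ← Complex.exp_nat_mul, ← Complex.exp_nat_mul, ← Complex.exp_add]
      have harg : (n:ℂ) * ((θ:ℂ) * I) + (m:ℂ) * (-(θ:ℂ) * I)
          = ((((n:ℝ) - m) * θ : ℝ) : ℂ) * I := by
        push_cast
        ring
      rw [harg]
      push_cast
      ring
    rw [hLeq] at hmain
    refine hmain.congr' ?_
    filter_upwards [eventually_gt_atTop (0:ℝ)] with r hr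
    have hr0 : (r:ℂ) ≠ 0 := by exact_mod_cast ne_of_gt hr
    simp only [hf, hu]
    rw [map_div₀, map_pow]
    have hcu : (starRingEnd ℂ) ((r:ℂ) * e) = (r:ℂ) * (starRingEnd ℂ) e := by
      rw [map_mul, Complex.conj_ofReal]
    rw [hcu]
    have hce0 : (starRingEnd ℂ) e ≠ 0 := by
      simpa using he0
    rw [mul_pow, mul_pow]
    field_simp
    ring
  have key : 0 ≤ L.im := by
    refine im_lim_nonneg ?_ hlim
    filter_upwards [eventually_gt_atTop (0:ℝ)] with r hr
    exact ⟨hr, hprod (u r) (him r hr)⟩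
  rw [hL, Complex.mul_im] at key
  simp only [Complex.exp_ofReal_mul_I_im, Complex.exp_ofReal_mul_I_re, Complex.ofReal_im,
    Complex.ofReal_re, mul_zero, add_zero, zero_add] at key
  linarith [key]

lemma deg_diff (P Q : ℝ[X]) (hP : P ≠ 0) (hQ : Q ≠ 0)
    (hprod : ∀ u : ℂ, 0 < u.im → 0 < ((aeval u) P * (starRingEnd ℂ) ((aeval u) Q)).im) :
    |(P.natDegree : ℤ) - Q.natDegree| ≤ 1 := by
  set n := P.natDegree with hn
  set m := Q.natDegree with hm
  have hpq : P.leadingCoeff * Q.leadingCoeff ≠ 0 :=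
    mul_ne_zero (leadingCoeff_ne_zero.mpr hP) (leadingCoeff_ne_zero.mpr hQ)
  by_contra hcon
  rw [not_le] at hcon
  have h2 : 2 ≤ (n:ℤ) - m ∨ 2 ≤ (m:ℤ) - n := by
    rcases abs_cases ((n:ℤ) - m) with ⟨heq, hge⟩ | ⟨heq, hlt⟩ <;> omega
  rcases h2 with h2 | h2
  · have hk : 2 ≤ n - m := by omega
    have hmn : m ≤ n := by omega
    refine hpq (sign_aux hk ?_)
    intro θ h0 hπ
    have h3 := ray_deg P Q hprod θ h0 hπ
    have hcast : ((n - m : ℕ) : ℝ) = (n:ℝ) - m := by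
      rw [Nat.cast_sub hmn]
    rwa [hcast]
  · have hk : 2 ≤ m - n := by omega
    have hmn : n ≤ m := by omega
    have := sign_aux (c := -(P.leadingCoeff * Q.leadingCoeff)) hk ?_
    · exact hpq (by linarith [this])
    intro θ h0 hπ
    have h3 := ray_deg P Q hprod θ h0 hπ
    have hcast : ((m - n : ℕ) : ℝ) * θ = -(((n:ℝ) - m) * θ) := by
      rw [Nat.cast_sub hmn]; ring
    rw [hcast, Real.sin_neg]
    nlinarith [h3]


lemma sign_const (p : ℝ[X]) (a b : ℝ)
    (hno : ∀ t : ℝ, a < t → t < b → ¬ p.IsRoot t) :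
    ∀ s t : ℝ, s ∈ Set.Ioo a b → t ∈ Set.Ioo a b → 0 < p.eval s * p.eval t := by
  intro s t hs ht
  have hs0 : p.eval s ≠ 0 := hno s hs.1 hs.2
  have ht0 : p.eval t ≠ 0 := hno t ht.1 ht.2
  by_contra hc
  push_neg at hc
  have hlt : p.eval s * p.eval t < 0 := lt_of_le_of_ne hc (mul_ne_zero hs0 ht0)
  have h0mem : (0:ℝ) ∈ Set.uIcc (p.eval s) (p.eval t) := by
    rcases mul_neg_iff.mp hlt with ⟨h1, h2⟩ | ⟨h1, h2⟩
    · exact Set.mem_uIcc.mpr (Or.inr ⟨h2.le, h1.le⟩)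
    · exact Set.mem_uIcc.mpr (Or.inl ⟨h1.le, h2.le⟩)
  obtain ⟨z, hz, hz0⟩ := intermediate_value_uIcc (f := fun x => p.eval x)
    (p.continuous.continuousOn) h0mem
  have hzmem : z ∈ Set.Ioo a b := Set.ordConnected_Ioo.uIcc_subset hs ht hz
  exact hno z hzmem.1 hzmem.2 hz0

lemma deriv_sign_right (p : ℝ[X]) (a b : ℝ) (hab : a < b) (σ : ℝ)
    (hsgn : ∀ t : ℝ, t ∈ Set.Ioo a b → 0 < p.eval t * σ) (hroot : p.IsRoot a) :
    0 ≤ (derivative p).eval a * σ := by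
  have hd : HasDerivAt (fun x => p.eval x) ((derivative p).eval a) a := p.hasDerivAt a
  rw [hasDerivAt_iff_tendsto_slope] at hd
  have hd' : Tendsto (fun t => slope (fun x => p.eval x) a t * σ) (nhdsWithin a (Set.Ioi a))
      (𝓝 ((derivative p).eval a * σ)) :=
    (hd.mono_left (nhdsWithin_mono _ (fun x hx => ne_of_gt hx))).mul_const σ
  refine ge_of_tendsto hd' ?_
  filter_upwards [Ioo_mem_nhdsGT_of_mem ⟨le_refl a, hab⟩] with t ht
  have h1 : 0 < p.eval t * σ := hsgn t ht
  have h2 : 0 < t - a := sub_pos.mpr ht.1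
  rw [slope_def_field, hroot.eq_zero, sub_zero, div_mul_eq_mul_div]
  positivity

lemma deriv_sign_left (p : ℝ[X]) (a b : ℝ) (hab : a < b) (σ : ℝ)
    (hsgn : ∀ t : ℝ, t ∈ Set.Ioo a b → 0 < p.eval t * σ) (hroot : p.IsRoot b) :
    (derivative p).eval b * σ ≤ 0 := by
  have hd : HasDerivAt (fun x => p.eval x) ((derivative p).eval b) b := p.hasDerivAt b
  rw [hasDerivAt_iff_tendsto_slope] at hd
  have hd' : Tendsto (fun t => slope (fun x => p.eval x) b t * σ) (nhdsWithin b (Set.Iio b))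
      (𝓝 ((derivative p).eval b * σ)) :=
    (hd.mono_left (nhdsWithin_mono _ (fun x hx => ne_of_lt hx))).mul_const σ
  refine le_of_tendsto hd' ?_
  filter_upwards [Ioo_mem_nhdsLT_of_mem ⟨hab, le_refl b⟩] with t ht
  have h1 : 0 < p.eval t * σ := hsgn t ht
  have h2 : t - b < 0 := sub_neg.mpr ht.2
  rw [slope_def_field, hroot.eq_zero, sub_zero, div_mul_eq_mul_div]
  exact le_of_lt (div_neg_of_pos_of_neg h1 h2)

lemma exists_between (P Q : ℝ[X])
    (hkey : ∀ x : ℝ, P.IsRoot x → 0 < (derivative P).eval x * Q.eval x)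
    (a b : ℝ) (hab : a < b) (ha : P.IsRoot a) (hb : P.IsRoot b)
    (hno : ∀ t : ℝ, a < t → t < b → ¬ P.IsRoot t) :
    ∃ t : ℝ, a < t ∧ t < b ∧ Q.IsRoot t := by
  set mp : ℝ := (a + b)/2 with hmp
  have hmem : mp ∈ Set.Ioo a b := ⟨by linarith, by linarith⟩
  set σ : ℝ := P.eval mp with hσ
  have hsgn : ∀ t : ℝ, t ∈ Set.Ioo a b → 0 < P.eval t * σ :=
    fun t ht => sign_const P a b hno t mp ht hmem
  have hda : 0 ≤ (derivative P).eval a * σ := deriv_sign_right P a b hab σ hsgn ha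
  have hdb : (derivative P).eval b * σ ≤ 0 := deriv_sign_left P a b hab σ hsgn hb
  have hσ0 : σ ≠ 0 := hno mp hmem.1 hmem.2
  have hda0 : (derivative P).eval a ≠ 0 := by
    intro h
    have := hkey a ha
    rw [h, zero_mul] at this
    exact lt_irrefl 0 this
  have hdb0 : (derivative P).eval b ≠ 0 := by
    intro h
    have := hkey b hb
    rw [h, zero_mul] at this
    exact lt_irrefl 0 this
  have hda' : 0 < (derivative P).eval a * σ :=
    lt_of_le_of_ne hda (Ne.symm (mul_ne_zero hda0 hσ0))
  have hdb' : (derivative P).eval b * σ < 0 :=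
    lt_of_le_of_ne hdb (mul_ne_zero hdb0 hσ0)
  -- Q(a) * σ > 0
  have hQa : 0 < Q.eval a * σ := by
    by_contra h
    push_neg at h
    have h1 : Q.eval a * σ * ((derivative P).eval a)^2 ≤ 0 :=
      mul_nonpos_of_nonpos_of_nonneg h (sq_nonneg _)
    nlinarith [mul_pos (hkey a ha) hda']
  have hQb : Q.eval b * σ < 0 := by
    by_contra h
    push_neg at h
    have h1 : 0 ≤ Q.eval b * σ * ((derivative P).eval b)^2 :=
      mul_nonneg h (sq_nonneg _)
    nlinarith [mul_pos (hkey b hb) (neg_pos.mpr hdb'), sq_nonneg ((derivative P).eval b)]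
  -- intermediate value
  rcases lt_or_gt_of_ne hσ0 with hσneg | hσpos
  · -- σ < 0 : Q.eval a < 0 < Q.eval b
    have h1 : Q.eval a < 0 := by nlinarith
    have h2 : 0 < Q.eval b := by nlinarith
    have h0 : (0:ℝ) ∈ Set.Ioo (Q.eval a) (Q.eval b) := ⟨h1, h2⟩
    obtain ⟨t, ht, ht0⟩ := intermediate_value_Ioo (le_of_lt hab)
      (Q.continuous.continuousOn) h0
    exact ⟨t, ht.1, ht.2, ht0⟩
  · have h1 : 0 < Q.eval a := by nlinarith
    have h2 : Q.eval b < 0 := by nlinarith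
    have h0 : (0:ℝ) ∈ Set.Ioo (Q.eval b) (Q.eval a) := ⟨h2, h1⟩
    obtain ⟨t, ht, ht0⟩ := intermediate_value_Ioo' (le_of_lt hab)
      (Q.continuous.continuousOn) h0
    exact ⟨t, ht.1, ht.2, ht0⟩

lemma no_two (P Q : ℝ[X]) (hP : P ≠ 0)
    (hkey : ∀ x : ℝ, P.IsRoot x → 0 < (derivative P).eval x * Q.eval x)
    (a b : ℝ) (hnoQ : ∀ t : ℝ, a < t → t < b → ¬ Q.IsRoot t)
    (t1 t2 : ℝ) (h1 : t1 ∈ Set.Ioo a b) (h2 : t2 ∈ Set.Ioo a b) (hlt : t1 < t2)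
    (hr1 : P.IsRoot t1) (hr2 : P.IsRoot t2) : False := by
  set s : Set ℝ := {x | P.IsRoot x} ∩ Set.Ioc t1 t2 with hs
  have hfin : s.Finite := (Polynomial.finite_setOf_isRoot hP).inter_of_left _
  have hne : s.Nonempty := ⟨t2, hr2, ⟨hlt, le_refl _⟩⟩
  obtain ⟨t', ht', hmin⟩ := Set.exists_min_image s id hfin hne
  obtain ⟨hrt', ht'mem⟩ := ht'
  have hno' : ∀ t : ℝ, t1 < t → t < t' → ¬ P.IsRoot t := by
    intro t ha' hb' hr
    have : t' ≤ t := hmin t ⟨hr, ⟨ha', le_of_lt (lt_of_lt_of_le hb' ht'mem.2)⟩⟩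
    exact absurd this (not_le.mpr hb')
  obtain ⟨z, hz1, hz2, hzr⟩ := exists_between P Q hkey t1 t' ht'mem.1 hr1 hrt' hno'
  exact hnoQ z (lt_trans h1.1 hz1)
    (lt_of_lt_of_le hz2 (le_trans ht'mem.2 (le_of_lt h2.2))) hzr

end HB

/-- If `P, Q` are nonzero coprime real polynomials such that `R = P/Q` maps the open
upper half-plane into itself, then all complex roots of `P` and of `Q` are real and
simple, the roots of `P` and of `Q` strictly interlace, and the degrees of `P` and `Q`
differ by at most `1`. -/
theorem real_rational_upper_halfplane_necessity
    (P Q : Polynomial ℝ) (hP : P ≠ 0) (hQ : Q ≠ 0) (hPQ : IsCoprime P Q)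
    (hmap : ∀ u : ℂ, 0 < u.im → 0 < ((aeval u) P / (aeval u) Q).im) :
    -- every complex root of P is real, and every complex root of Q is real
    (∀ u : ℂ, (aeval u) P = 0 → u.im = 0) ∧
    (∀ u : ℂ, (aeval u) Q = 0 → u.im = 0) ∧
    -- all roots are simple
    (∀ x : ℝ, P.IsRoot x → P.rootMultiplicity x = 1) ∧
    (∀ x : ℝ, Q.IsRoot x → Q.rootMultiplicity x = 1) ∧
    -- between any two consecutive roots of Q there is exactly one root of P
    (∀ a b : ℝ, a < b → Q.IsRoot a → Q.IsRoot b →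
        (∀ t : ℝ, a < t → t < b → ¬ Q.IsRoot t) →
        ∃! t : ℝ, a < t ∧ t < b ∧ P.IsRoot t) ∧
    -- between any two consecutive roots of P there is exactly one root of Q
    (∀ a b : ℝ, a < b → P.IsRoot a → P.IsRoot b →
        (∀ t : ℝ, a < t → t < b → ¬ P.IsRoot t) →
        ∃! t : ℝ, a < t ∧ t < b ∧ Q.IsRoot t) ∧
    -- the degrees differ by at most one
    |(P.natDegree : ℤ) - (Q.natDegree : ℤ)| ≤ 1 := by
  have hprod := HB.prod_im_pos P Q hmap
  -- realness of roots
  have hrealP : ∀ u : ℂ, (aeval u) P = 0 → u.im = 0 := by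
    intro u hu
    by_contra h
    rcases lt_or_gt_of_ne h with hneg | hpos
    · have hv : 0 < ((starRingEnd ℂ) u).im := by
        rw [Complex.conj_im]; linarith
      have hz : aeval ((starRingEnd ℂ) u) P = 0 := by
        rw [Polynomial.aeval_conj, hu, map_zero]
      have h2 := hmap _ hv
      rw [hz, zero_div] at h2
      simp at h2
    · have h2 := hmap u hpos
      rw [hu, zero_div] at h2
      simp at h2
  have hrealQ : ∀ u : ℂ, (aeval u) Q = 0 → u.im = 0 := by
    intro u hu
    by_contra h
    rcases lt_or_gt_of_ne h with hneg | hpos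
    · have hv : 0 < ((starRingEnd ℂ) u).im := by
        rw [Complex.conj_im]; linarith
      have hz : aeval ((starRingEnd ℂ) u) Q = 0 := by
        rw [Polynomial.aeval_conj, hu, map_zero]
      have h2 := hmap _ hv
      rw [hz, div_zero] at h2
      simp at h2
    · have h2 := hmap u hpos
      rw [hu, div_zero] at h2
      simp at h2
  -- coprimality at points
  have hcop : ∀ x : ℝ, ¬(P.eval x = 0 ∧ Q.eval x = 0) := by
    obtain ⟨A, B, hAB⟩ := hPQ
    rintro x ⟨h1, h2⟩
    have := congrArg (Polynomial.eval x) hAB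
    simp [h1, h2] at this
  -- key facts at roots of P
  have keyP : ∀ x : ℝ, P.IsRoot x →
      P.rootMultiplicity x = 1 ∧ 0 < (derivative P).eval x * Q.eval x := by
    intro x hx
    set a := rootMultiplicity x P with haa
    set S := P /ₘ (X - C x) ^ a with hSS
    have hfac : P = (X - C x)^a * S := (P.pow_mul_divByMonic_rootMultiplicity_eq x).symm
    have hS0 : S.eval x ≠ 0 := Polynomial.eval_divByMonic_pow_rootMultiplicity_ne_zero x hP
    have hQ0 : Q.eval x ≠ 0 := fun h => hcop x ⟨hx, h⟩
    have hc : S.eval x * Q.eval x ≠ 0 := mul_ne_zero hS0 hQ0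
    have hray : ∀ θ : ℝ, 0 < θ → θ < Real.pi →
        0 ≤ (S.eval x * Q.eval x) * Real.sin (a * θ) :=
      fun θ h1 h2 => HB.ray_root P Q hprod x a S hfac θ h1 h2
    have hapos : 0 < a := (Polynomial.rootMultiplicity_pos hP).mpr hx
    have ha1 : a = 1 := by
      by_contra hne
      exact hc (HB.sign_aux (by omega) hray)
    have hcpos : 0 < S.eval x * Q.eval x := by
      rcases lt_or_gt_of_ne hc with hlt | hgt
      · exfalso
        have h5 := hray (Real.pi/2) (by positivity) (by linarith [Real.pi_pos])
        rw [ha1] at h5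
        simp [Real.sin_pi_div_two] at h5
        linarith
      · exact hgt
    refine ⟨ha1, ?_⟩
    rw [ha1, pow_one] at hfac
    have hder : (derivative P).eval x = S.eval x := by
      rw [hfac, derivative_mul, derivative_X_sub_C]
      simp
    rw [hder]
    exact hcpos
  -- key facts at roots of Q
  have keyQ : ∀ x : ℝ, Q.IsRoot x →
      Q.rootMultiplicity x = 1 ∧ P.eval x * (derivative Q).eval x < 0 := by
    intro x hx
    set b := rootMultiplicity x Q with hbb
    set T := Q /ₘ (X - C x) ^ b with hTT
    have hfac : Q = (X - C x)^b * T := (Q.pow_mul_divByMonic_rootMultiplicity_eq x).symm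
    have hT0 : T.eval x ≠ 0 := Polynomial.eval_divByMonic_pow_rootMultiplicity_ne_zero x hQ
    have hP0 : P.eval x ≠ 0 := fun h => hcop x ⟨h, hx⟩
    have hc : -(P.eval x * T.eval x) ≠ 0 := by
      simp only [neg_ne_zero]
      exact mul_ne_zero hP0 hT0
    have hray : ∀ θ : ℝ, 0 < θ → θ < Real.pi →
        0 ≤ (-(P.eval x * T.eval x)) * Real.sin (b * θ) :=
      fun θ h1 h2 => HB.ray_rootQ P Q hprod x b T hfac θ h1 h2
    have hbpos : 0 < b := (Polynomial.rootMultiplicity_pos hQ).mpr hx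
    have hb1 : b = 1 := by
      by_contra hne
      exact hc (HB.sign_aux (by omega) hray)
    have hcpos : P.eval x * T.eval x < 0 := by
      rcases lt_or_gt_of_ne (mul_ne_zero hP0 hT0) with hlt | hgt
      · exact hlt
      · exfalso
        have h5 := hray (Real.pi/2) (by positivity) (by linarith [Real.pi_pos])
        rw [hb1] at h5
        simp [Real.sin_pi_div_two] at h5
        linarith
    refine ⟨hb1, ?_⟩
    rw [hb1, pow_one] at hfac
    have hder : (derivative Q).eval x = T.eval x := by
      rw [hfac, derivative_mul, derivative_X_sub_C]
      simp
    rw [hder]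
    exact hcpos
  have hkeyQP : ∀ x : ℝ, Q.IsRoot x → 0 < (derivative Q).eval x * (-P).eval x := by
    intro x hx
    have h := (keyQ x hx).2
    rw [eval_neg]
    nlinarith [h]
  refine ⟨hrealP, hrealQ, fun x hx => (keyP x hx).1, fun x hx => (keyQ x hx).1, ?_, ?_, ?_⟩
  · -- between consecutive roots of Q, exactly one root of P
    intro a b hab ha hb hno
    obtain ⟨t, ht1, ht2, htr⟩ := HB.exists_between Q (-P) hkeyQP a b hab ha hb hno
    have htr' : P.IsRoot t := by
      rwa [Polynomial.IsRoot, eval_neg, neg_eq_zero] at htr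
    refine ⟨t, ⟨ht1, ht2, htr'⟩, ?_⟩
    rintro y ⟨hy1, hy2, hyr⟩
    by_contra hne
    rcases lt_or_gt_of_ne hne with hlt | hgt
    · exact HB.no_two P Q hP (fun x hx => (keyP x hx).2) a b hno y t
        ⟨hy1, hy2⟩ ⟨ht1, ht2⟩ hlt hyr htr'
    · exact HB.no_two P Q hP (fun x hx => (keyP x hx).2) a b hno t y
        ⟨ht1, ht2⟩ ⟨hy1, hy2⟩ hgt htr' hyr
  · -- between consecutive roots of P, exactly one root of Q
    intro a b hab ha hb hno
    obtain ⟨t, ht1, ht2, htr⟩ := HB.exists_between P Q (fun x hx => (keyP x hx).2)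
      a b hab ha hb hno
    refine ⟨t, ⟨ht1, ht2, htr⟩, ?_⟩
    rintro y ⟨hy1, hy2, hyr⟩
    by_contra hne
    have hnoP' : ∀ s : ℝ, a < s → s < b → ¬ (-P).IsRoot s := by
      intro s h1 h2 hr
      exact hno s h1 h2 (by rwa [Polynomial.IsRoot, eval_neg, neg_eq_zero] at hr)
    have hQne : Q ≠ 0 := hQ
    rcases lt_or_gt_of_ne hne with hlt | hgt
    · exact HB.no_two Q (-P) hQne hkeyQP a b hnoP' y t ⟨hy1, hy2⟩ ⟨ht1, ht2⟩ hlt hyr htr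
    · exact HB.no_two Q (-P) hQne hkeyQP a b hnoP' t y ⟨ht1, ht2⟩ ⟨hy1, hy2⟩ hgt htr hyr
  · exact HB.deg_diff P Q hP hQ hprod
end

section
/- Let T > 0, τ = iT, and θ₁ be the odd Jacobi theta function of modulus iT. Let N ≥ 1, let m be an integer, and let z_1, …, z_N, p_1, …, p_N be complex numbers each of whose real parts equals 0 or 1/2, such that the number of indices j with Re z_j = 0 equals the number of indices j with Re p_j = 0. Define h(x) = exp(−2 π i m x)·∏_{j=1}^N θ₁(x − z_j)/θ₁(x − p_j). Then for every complex x at which all factors θ₁(x − p_j) and θ₁(−conj(x) − p_j) are nonzero, h(−conj x) = conj(h(x)). In particular, if Re x = 0 and all denominators are nonzero, then h(x) is real. -/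
open Complex

/-- The odd Jacobi theta function of modulus `τ = iT`:
`θ₁(z) = -i exp(π i τ/4 + π i z) Θ₂(z + (1+τ)/2, τ)`. -/
noncomputable def oddTheta (T : ℝ) (z : ℂ) : ℂ :=
  -Complex.I *
    Complex.exp ((Real.pi : ℂ) * Complex.I * (Complex.I * (T : ℂ)) / 4
      + (Real.pi : ℂ) * Complex.I * z) *
    jacobiTheta₂ (z + (1 + Complex.I * (T : ℂ)) / 2) (Complex.I * (T : ℂ))

lemma oddTheta_conj (T : ℝ) (z : ℂ) :
    (starRingEnd ℂ) (oddTheta T z) = oddTheta T ((starRingEnd ℂ) z) := by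
  unfold oddTheta
  rw [map_mul, map_mul, ← Complex.exp_conj, jacobiTheta₂_conj]
  have h1 : (starRingEnd ℂ) (z + (1 + Complex.I * (T : ℂ)) / 2)
      = ((starRingEnd ℂ) z + (1 + Complex.I * (T : ℂ)) / 2 - Complex.I * T) := by
    simp [Complex.conj_I, Complex.conj_ofReal, map_ofNat]
    ring
  have h2 : -((starRingEnd ℂ) (Complex.I * (T : ℂ))) = Complex.I * T := by
    simp [Complex.conj_I, Complex.conj_ofReal, map_ofNat]
  rw [h1, h2]
  have h3 : jacobiTheta₂ ((starRingEnd ℂ) z + (1 + Complex.I * (T : ℂ)) / 2) (Complex.I * T)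
      = Complex.exp (-(Real.pi : ℂ) * Complex.I * (Complex.I * T
          + 2 * ((starRingEnd ℂ) z + (1 + Complex.I * (T : ℂ)) / 2 - Complex.I * T))) *
        jacobiTheta₂ ((starRingEnd ℂ) z + (1 + Complex.I * (T : ℂ)) / 2 - Complex.I * T)
          (Complex.I * T) := by
    rw [← jacobiTheta₂_add_left' ((starRingEnd ℂ) z + (1 + Complex.I * (T : ℂ)) / 2
      - Complex.I * T) (Complex.I * T)]
    congr 1
    ring
  rw [h3]
  have hA : (starRingEnd ℂ) ((Real.pi : ℂ) * Complex.I * (Complex.I * (T : ℂ)) / 4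
        + (Real.pi : ℂ) * Complex.I * z)
      = ((Real.pi : ℂ) * Complex.I * (Complex.I * (T : ℂ)) / 4
          + (Real.pi : ℂ) * Complex.I * ((starRingEnd ℂ) z))
        + (-(Real.pi : ℂ) * Complex.I * (Complex.I * T
          + 2 * ((starRingEnd ℂ) z + (1 + Complex.I * (T : ℂ)) / 2 - Complex.I * T)))
        + (Real.pi : ℂ) * Complex.I := by
    simp [map_add, map_mul, map_div₀, Complex.conj_I, Complex.conj_ofReal, map_ofNat]
    ring
  rw [hA, Complex.exp_add, Complex.exp_add, Complex.exp_pi_mul_I]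
  simp [Complex.conj_I]
  ring

lemma oddTheta_add_one (T : ℝ) (z : ℂ) : oddTheta T (z + 1) = -oddTheta T z := by
  unfold oddTheta
  have h1 : jacobiTheta₂ (z + 1 + (1 + Complex.I * (T : ℂ)) / 2) (Complex.I * T)
      = jacobiTheta₂ (z + (1 + Complex.I * (T : ℂ)) / 2) (Complex.I * T) := by
    rw [← jacobiTheta₂_add_left (z + (1 + Complex.I * (T : ℂ)) / 2) (Complex.I * T)]
    congr 1; ring
  rw [h1]
  have h2 : (Real.pi : ℂ) * Complex.I * (Complex.I * (T : ℂ)) / 4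
      + (Real.pi : ℂ) * Complex.I * (z + 1)
      = ((Real.pi : ℂ) * Complex.I * (Complex.I * (T : ℂ)) / 4
        + (Real.pi : ℂ) * Complex.I * z) + (Real.pi : ℂ) * Complex.I := by ring
  rw [h2, Complex.exp_add, Complex.exp_pi_mul_I]
  ring

lemma oddTheta_neg (T : ℝ) (z : ℂ) : oddTheta T (-z) = -oddTheta T z := by
  unfold oddTheta
  have h1 : jacobiTheta₂ (-z + (1 + Complex.I * (T : ℂ)) / 2) (Complex.I * T)
      = jacobiTheta₂ (z + (1 + Complex.I * (T : ℂ)) / 2 - Complex.I * T) (Complex.I * T) := by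
    rw [show (-z + (1 + Complex.I * (T : ℂ)) / 2 : ℂ)
      = -(z + (1 + Complex.I * (T : ℂ)) / 2 - Complex.I * T - 1) from by ring,
      jacobiTheta₂_neg_left, ← jacobiTheta₂_add_left]
    congr 1; ring
  rw [h1]
  have h3 : jacobiTheta₂ (z + (1 + Complex.I * (T : ℂ)) / 2) (Complex.I * T)
      = Complex.exp (-(Real.pi : ℂ) * Complex.I * (Complex.I * T
          + 2 * (z + (1 + Complex.I * (T : ℂ)) / 2 - Complex.I * T))) *
        jacobiTheta₂ (z + (1 + Complex.I * (T : ℂ)) / 2 - Complex.I * T) (Complex.I * T) := by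
    rw [← jacobiTheta₂_add_left' (z + (1 + Complex.I * (T : ℂ)) / 2 - Complex.I * T)
      (Complex.I * T)]
    congr 1; ring
  rw [h3]
  have h2 : (Real.pi : ℂ) * Complex.I * (Complex.I * (T : ℂ)) / 4
      + (Real.pi : ℂ) * Complex.I * (-z)
      = ((Real.pi : ℂ) * Complex.I * (Complex.I * (T : ℂ)) / 4
        + (Real.pi : ℂ) * Complex.I * z)
      + (-(Real.pi : ℂ) * Complex.I * (Complex.I * T
          + 2 * (z + (1 + Complex.I * (T : ℂ)) / 2 - Complex.I * T)))
      + (Real.pi : ℂ) * Complex.I := by ring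
  rw [h2, Complex.exp_add, Complex.exp_add, Complex.exp_pi_mul_I]
  ring

lemma oddTheta_reflect (T : ℝ) (x w : ℂ) (hw : w.re = 0 ∨ w.re = 1 / 2) :
    oddTheta T (-(starRingEnd ℂ) x - w)
      = (if w.re = 0 then (-1 : ℂ) else 1) * (starRingEnd ℂ) (oddTheta T (x - w)) := by
  rcases hw with h | h
  · have hw' : (starRingEnd ℂ) w = -w := by
      apply Complex.ext <;> simp [h]
    rw [if_pos h]
    have hx : -(starRingEnd ℂ) x - w = -((starRingEnd ℂ) (x - w)) := by
      rw [map_sub, hw']; ring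
    rw [hx, oddTheta_neg, oddTheta_conj]
    ring
  · have hw' : (starRingEnd ℂ) w = 1 - w := by
      apply Complex.ext <;> simp [h] <;> norm_num
    rw [if_neg (by rw [h]; norm_num)]
    have hx : -(starRingEnd ℂ) x - w = -((starRingEnd ℂ) (x - w) + 1) := by
      rw [map_sub, hw']; ring
    rw [hx, oddTheta_neg, oddTheta_add_one, neg_neg, oddTheta_conj, one_mul]

/-- If the zeros `z_j` and poles `p_j` lie on the ovals `Re = 0` and `Re = 1/2` of the
torus `ℂ/(ℤ + iTℤ)` with equally many zeros and poles on each oval, then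
`h(x) = exp(-2πimx) ∏ θ₁(x - z_j)/θ₁(x - p_j)` satisfies the reflection symmetry
`h(-conj x) = conj (h x)`; in particular `h` is real on the oval `Re x = 0`. -/
theorem theta_product_halfplane_real_symmetric (T : ℝ) (hT : 0 < T)
    (N : ℕ) (hN : 1 ≤ N) (m : ℤ) (z p : Fin N → ℂ)
    (hz : ∀ j : Fin N, (z j).re = 0 ∨ (z j).re = 1 / 2)
    (hp : ∀ j : Fin N, (p j).re = 0 ∨ (p j).re = 1 / 2)
    (hcount : (Finset.univ.filter fun j : Fin N => (z j).re = 0).card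
      = (Finset.univ.filter fun j : Fin N => (p j).re = 0).card) :
    ∀ x : ℂ, (∀ j : Fin N, oddTheta T (x - p j) ≠ 0) →
      (∀ j : Fin N, oddTheta T (-(starRingEnd ℂ) x - p j) ≠ 0) →
      (Complex.exp (-2 * (Real.pi : ℂ) * Complex.I * (m : ℂ) * (-(starRingEnd ℂ) x)) *
          ∏ j : Fin N, oddTheta T (-(starRingEnd ℂ) x - z j) /
            oddTheta T (-(starRingEnd ℂ) x - p j)
        = (starRingEnd ℂ) (Complex.exp (-2 * (Real.pi : ℂ) * Complex.I * (m : ℂ) * x) *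
            ∏ j : Fin N, oddTheta T (x - z j) / oddTheta T (x - p j))) ∧
      (x.re = 0 →
        (Complex.exp (-2 * (Real.pi : ℂ) * Complex.I * (m : ℂ) * x) *
            ∏ j : Fin N, oddTheta T (x - z j) / oddTheta T (x - p j)).im = 0) := by
  intro x hdx hdcx
  have key : ∀ j : Fin N,
      oddTheta T (-(starRingEnd ℂ) x - z j) / oddTheta T (-(starRingEnd ℂ) x - p j)
      = ((if (z j).re = 0 then (-1 : ℂ) else 1) / (if (p j).re = 0 then (-1 : ℂ) else 1)) *
        (starRingEnd ℂ) (oddTheta T (x - z j) / oddTheta T (x - p j)) := by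
    intro j
    rw [oddTheta_reflect T x (z j) (hz j), oddTheta_reflect T x (p j) (hp j), map_div₀,
      mul_div_mul_comm]
  have hsign : (∏ j : Fin N,
      ((if (z j).re = 0 then (-1 : ℂ) else 1) / (if (p j).re = 0 then (-1 : ℂ) else 1))) = 1 := by
    rw [Finset.prod_div_distrib, Finset.prod_ite, Finset.prod_ite]
    simp only [Finset.prod_const, one_pow, mul_one]
    rw [hcount]
    exact div_self (pow_ne_zero _ (by norm_num))
  have hexp : Complex.exp (-2 * (Real.pi : ℂ) * Complex.I * (m : ℂ) * (-(starRingEnd ℂ) x))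
      = (starRingEnd ℂ) (Complex.exp (-2 * (Real.pi : ℂ) * Complex.I * (m : ℂ) * x)) := by
    rw [← Complex.exp_conj]
    congr 1
    simp only [map_mul, map_neg, map_ofNat, map_intCast, Complex.conj_I, Complex.conj_ofReal]
    ring
  have main : Complex.exp (-2 * (Real.pi : ℂ) * Complex.I * (m : ℂ) * (-(starRingEnd ℂ) x)) *
      ∏ j : Fin N, oddTheta T (-(starRingEnd ℂ) x - z j) /
        oddTheta T (-(starRingEnd ℂ) x - p j)
      = (starRingEnd ℂ) (Complex.exp (-2 * (Real.pi : ℂ) * Complex.I * (m : ℂ) * x) *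
          ∏ j : Fin N, oddTheta T (x - z j) / oddTheta T (x - p j)) := by
    have hprod : (∏ j : Fin N, oddTheta T (-(starRingEnd ℂ) x - z j) /
          oddTheta T (-(starRingEnd ℂ) x - p j))
        = ∏ j : Fin N, (starRingEnd ℂ) (oddTheta T (x - z j) / oddTheta T (x - p j)) := by
      calc (∏ j : Fin N, oddTheta T (-(starRingEnd ℂ) x - z j) /
            oddTheta T (-(starRingEnd ℂ) x - p j))
          = ∏ j : Fin N,
            (((if (z j).re = 0 then (-1 : ℂ) else 1) / (if (p j).re = 0 then (-1 : ℂ) else 1)) *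
              (starRingEnd ℂ) (oddTheta T (x - z j) / oddTheta T (x - p j))) :=
            Finset.prod_congr rfl fun j _ => key j
        _ = (∏ j : Fin N,
              ((if (z j).re = 0 then (-1 : ℂ) else 1) / (if (p j).re = 0 then (-1 : ℂ) else 1))) *
            ∏ j : Fin N, (starRingEnd ℂ) (oddTheta T (x - z j) / oddTheta T (x - p j)) :=
            Finset.prod_mul_distrib
        _ = _ := by rw [hsign, one_mul]
    rw [hprod, hexp, ← map_prod, ← map_mul]
  refine ⟨main, fun hre => ?_⟩
  have hx : -(starRingEnd ℂ) x = x := by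
    apply Complex.ext <;> simp [hre]
  rw [hx] at main
  exact Complex.conj_eq_iff_im.mp main.symm
end
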